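/- Let α, β, c₂ be real constants, set γ = −1/2, κ = 0 and μ = 1, and let w : ℝ → ℝ be four times continuously differentiable and satisfy w·w⁗ + α·w′·w‴ + β·(w″)² − 4c₂·w‴ − w·w″ − (w′)² + 4c₂·w′ + 12c₂² = 0 on ℝ. Then the function u(x,t) = w(x − ⅓c₂·t³)·t − c₂²·t⁴ solves equation (1) at every point (x,t) ∈ ℝ². -/

import Mathlib

/-- `u` solves equation (1), the nonlinear fourth order PDE
`u_tt = (κ u + γ u²)_xx + u u_xxxx + μ u_xxtt + α u_x u_xxx + β (u_xx)²`,
at the point `(x, t)`. -/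
noncomputable def SolvesEq1 (α β γ κ μ : ℝ) (u : ℝ → ℝ → ℝ) (x t : ℝ) : Prop :=
  iteratedDeriv 2 (fun s => u x s) t =
    iteratedDeriv 2 (fun y => κ * u y t + γ * (u y t) ^ 2) x
    + u x t * iteratedDeriv 4 (fun y => u y t) x
    + μ * iteratedDeriv 2 (fun y => iteratedDeriv 2 (fun s => u y s) t) x
    + α * deriv (fun y => u y t) x * iteratedDeriv 3 (fun y => u y t) x
    + β * (iteratedDeriv 2 (fun y => u y t) x) ^ 2

/- Writing `z = x - c₂ t³ / 3`, every `x`-derivative of `u` is `t` times the corresponding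
derivative of `w` at `z`, while `u_tt = c₂² t⁵ w'' - 4 c₂ t² w' - 12 c₂² t²`. Substituting, the
`t⁵` terms of `u_tt` and `u_xxtt` cancel against those of `-(u²)_xx / 2` and `u u_xxxx`, and what
remains is `t²` times the ODE for `w`. -/

section

variable {𝕜 : Type*} [NontriviallyNormedField 𝕜] {F : Type*} [NormedAddCommGroup F]
  [NormedSpace 𝕜 F]

theorem iteratedDeriv_iteratedDeriv (m n : ℕ) (f : 𝕜 → F) :
    iteratedDeriv m (iteratedDeriv n f) = iteratedDeriv (m + n) f := by
  simp only [iteratedDeriv_eq_iterate, Function.iterate_add_apply]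

theorem ContDiff.iteratedDeriv' {f : 𝕜 → F} {m n : ℕ} (h : ContDiff 𝕜 (m + n : ℕ) f) :
    ContDiff 𝕜 m (iteratedDeriv n f) := by
  rw [iteratedDeriv_eq_iterate]
  exact h.iterate_deriv' m n

theorem iteratedDeriv_comp_sub_mul_const_sub {n : ℕ} (hn : n ≠ 0) (f : 𝕜 → 𝕜) (a c b : 𝕜) :
    iteratedDeriv n (fun y => f (y - a) * c - b) = fun y => iteratedDeriv n f (y - a) * c := by
  funext y
  have hshift : (fun y => f (y - a) * c - b) = fun y => -b + f (y - a) * c := by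
    funext y; ring
  rw [hshift, iteratedDeriv_const_add (Nat.pos_of_ne_zero hn), iteratedDeriv_mul_const_field,
    iteratedDeriv_comp_sub_const]

theorem iteratedDeriv_const_mul_comp_sub_sub {n : ℕ} (hn : n ≠ 0) {f g : 𝕜 → 𝕜}
    (hf : ContDiff 𝕜 n f) (hg : ContDiff 𝕜 n g) (A B C a x : 𝕜) :
    iteratedDeriv n (fun y => A * f (y - a) - B * g (y - a) - C) x
      = A * iteratedDeriv n f (x - a) - B * iteratedDeriv n g (x - a) := by
  have hshift : (fun y => A * f (y - a) - B * g (y - a) - C)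
      = fun y => -C + (A * f (y - a) - B * g (y - a)) := by
    funext y; ring
  rw [hshift, iteratedDeriv_const_add (Nat.pos_of_ne_zero hn),
    iteratedDeriv_fun_sub (by fun_prop) (by fun_prop), iteratedDeriv_const_mul_field,
    iteratedDeriv_const_mul_field, iteratedDeriv_comp_sub_const, iteratedDeriv_comp_sub_const]

theorem iteratedDeriv_two_fun_sq {f : 𝕜 → 𝕜} {x : 𝕜} (hf : ContDiffAt 𝕜 2 f x) :
    iteratedDeriv 2 (fun y => f y ^ 2) x = 2 * (deriv f x ^ 2 + f x * iteratedDeriv 2 f x) := by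
  have h := iteratedDeriv_comp_two (g := fun z : 𝕜 => z ^ 2) (by fun_prop) hf
  simp only [Function.comp_def, iteratedDeriv_pow, deriv_pow_field] at h
  rw [h]
  norm_num
  ring

end

theorem HasDerivAt.comp_sub_cubic {f : ℝ → ℝ} {f' : ℝ} {b c s : ℝ}
    (hf : HasDerivAt f f' (b - 1 / 3 * c * s ^ 3)) :
    HasDerivAt (fun s => f (b - 1 / 3 * c * s ^ 3)) (f' * -(c * s ^ 2)) s := by
  have hcubic : HasDerivAt (fun s => b - 1 / 3 * c * s ^ 3) (-(c * s ^ 2)) s := by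
    refine (((hasDerivAt_pow 3 s).const_mul (1 / 3 * c)).const_sub b).congr_deriv ?_
    push_cast; ring
  exact hf.comp s hcubic

theorem iteratedDeriv_two_cubic_ansatz_time {w : ℝ → ℝ} (hw : ContDiff ℝ 2 w) (b c t : ℝ) :
    iteratedDeriv 2 (fun s => w (b - 1 / 3 * c * s ^ 3) * s - c ^ 2 * s ^ 4) t
      = c ^ 2 * t ^ 5 * iteratedDeriv 2 w (b - 1 / 3 * c * t ^ 3)
        - 4 * c * t ^ 2 * deriv w (b - 1 / 3 * c * t ^ 3) - 12 * c ^ 2 * t ^ 2 := by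
  have hw1 : ∀ z, HasDerivAt w (deriv w z) z :=
    fun z => (hw.differentiable two_ne_zero z).hasDerivAt
  have hw2 : ∀ z, HasDerivAt (deriv w) (iteratedDeriv 2 w z) z := by
    intro z
    rw [iteratedDeriv_succ, iteratedDeriv_one]
    exact (hw.differentiable_deriv_two z).hasDerivAt
  have hfirst : deriv (fun s => w (b - 1 / 3 * c * s ^ 3) * s - c ^ 2 * s ^ 4)
      = fun s => w (b - 1 / 3 * c * s ^ 3) - c * s ^ 3 * deriv w (b - 1 / 3 * c * s ^ 3)
        - 4 * c ^ 2 * s ^ 3 := by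
    funext s
    refine ((((hw1 (b - 1 / 3 * c * s ^ 3)).comp_sub_cubic.mul (hasDerivAt_id' s)).sub
      ((hasDerivAt_pow 4 s).const_mul (c ^ 2))).deriv.trans ?_)
    push_cast; ring
  have hsecond := (((hw1 (b - 1 / 3 * c * t ^ 3)).comp_sub_cubic.sub
      (((hasDerivAt_pow 3 t).const_mul c).mul (hw2 (b - 1 / 3 * c * t ^ 3)).comp_sub_cubic)).sub
      ((hasDerivAt_pow 3 t).const_mul (4 * c ^ 2)))
  rw [iteratedDeriv_succ, iteratedDeriv_one, hfirst]
  refine hsecond.deriv.trans ?_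
  push_cast; ring

theorem cubic_accelerating_reduction_solves_eq1 (α β c₂ : ℝ) (w : ℝ → ℝ)
    (hw : ContDiff ℝ 4 w)
    (hODE : ∀ z : ℝ,
      w z * iteratedDeriv 4 w z
        + α * deriv w z * iteratedDeriv 3 w z
        + β * (iteratedDeriv 2 w z) ^ 2
        - 4 * c₂ * iteratedDeriv 3 w z
        - w z * iteratedDeriv 2 w z
        - (deriv w z) ^ 2
        + 4 * c₂ * deriv w z
        + 12 * c₂ ^ 2 = 0) :
    ∀ x t : ℝ,
      SolvesEq1 α β (-1 / 2) 0 1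
        (fun x t => w (x - (1 / 3) * c₂ * t ^ 3) * t - c₂ ^ 2 * t ^ 4) x t := by
  intro x t
  have hx (n) (hn : n ≠ 0) :=
    iteratedDeriv_comp_sub_mul_const_sub hn w (1 / 3 * c₂ * t ^ 3) t (c₂ ^ 2 * t ^ 4)
  have hx1 : deriv (fun y => w (y - 1 / 3 * c₂ * t ^ 3) * t - c₂ ^ 2 * t ^ 4)
      = fun y => deriv w (y - 1 / 3 * c₂ * t ^ 3) * t := by
    simpa only [iteratedDeriv_one] using hx 1 one_ne_zero
  have hw2 : ContDiff ℝ 2 w := hw.of_le (by norm_num)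
  have hu : ContDiffAt ℝ 2 (fun y => w (y - 1 / 3 * c₂ * t ^ 3) * t - c₂ ^ 2 * t ^ 4) x := by
    fun_prop
  have hmixed := iteratedDeriv_const_mul_comp_sub_sub two_ne_zero
    (hw.iteratedDeriv' (m := 2) (n := 2)) ((hw.of_le (m := 3) (by norm_num)).deriv' (n := 2))
  simp only [SolvesEq1, zero_mul, zero_add, iteratedDeriv_const_mul_field,
    iteratedDeriv_two_fun_sq hu, iteratedDeriv_two_cubic_ansatz_time hw2,
    hx1, hx 2 two_ne_zero, hx 3 three_ne_zero, hx 4 four_ne_zero, hmixed,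
    iteratedDeriv_iteratedDeriv, ← iteratedDeriv_succ', Nat.reduceAdd]
  linear_combination (-(t ^ 2)) * hODE (x - 1 / 3 * c₂ * t ^ 3)
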